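/- Let Φ = X + θ₋ψ₊ + θ₊ψ₋ + θ₋θ₊F + zθ₋θ₊Y be a z-constrained degree-(0,0) superfield in 𝒜_A with smooth A-valued components of degrees deg X = (0,0), deg ψ₊ = (0,1), deg ψ₋ = (1,0), deg F = (1,1), deg Y = (0,0), and let ε₋, ε₊ ∈ A be constants of degrees (0,1) and (1,0). Then the z-degree-zero part of (ε₋Q₋ + ε₊Q₊)Φ equals δX + θ₋·δψ₊ + θ₊·δψ₋ + θ₋θ₊·δF, where δX = ε₋ψ₊ + ε₊ψ₋, δψ₊ = −½ε₋∂₋X + ε₊F, δψ₋ = −½ε₊∂₊X + ε₋F, and δF = −½(ε₋∂₋ψ₋ + ε₊∂₊ψ₊). -/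
import Mathlib


noncomputable section

/-- The group `ℤ₂ × ℤ₂`. -/
abbrev G2 : Type := ZMod 2 × ZMod 2

/-- The standard scalar product on `ℤ₂ × ℤ₂`. -/
def ip (γ γ' : G2) : ZMod 2 := γ.1 * γ'.1 + γ.2 * γ'.2

/-- The Koszul sign `(-1)^x`. -/
def ksign (x : ZMod 2) : ℝ := if x = 0 then 1 else -1

/-- Two-dimensional Minkowski spacetime in light-cone coordinates `(x⁻, x⁺)`. -/
abbrev E2 : Type := ℝ × ℝ

/-- Coefficient families `(k, a, b) ↦ f_{k,a,b}` representing the elements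
`Σ_{k,a,b} z^k θ₋^a θ₊^b f_{k,a,b}(x⁻,x⁺)` of the `ℤ₂²`-graded algebra `𝒜_A` of superfields on
`ℤ₂²`-Minkowski spacetime `ℝ^{2|1,1,1}`. -/
abbrev SF (A : Type*) : Type _ := ℕ → Bool → Bool → (E2 → A)

/-- `Bool → ZMod 2`. -/
def bz (a : Bool) : ZMod 2 := if a then 1 else 0

/-- The `ℤ₂²`-degree of the monomial `z^k θ₋^a θ₊^b`, where `deg z = (1,1)`,
`deg θ₋ = (0,1)` and `deg θ₊ = (1,0)`. -/
def mdeg (k : ℕ) (a b : Bool) : G2 := ((k : ZMod 2) + bz b, (k : ZMod 2) + bz a)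

/-- The light-cone partial derivative `∂₋`. -/
def pdm {W : Type*} [NormedAddCommGroup W] [NormedSpace ℝ W] (f : E2 → W) : E2 → W :=
  fun p => fderiv ℝ f p (1, 0)

/-- The light-cone partial derivative `∂₊`. -/
def pdp {W : Type*} [NormedAddCommGroup W] [NormedSpace ℝ W] (f : E2 → W) : E2 → W :=
  fun p => fderiv ℝ f p (0, 1)

namespace SF

variable {A : Type*} [NormedRing A] [NormedAlgebra ℝ A]

/-- `∂₋` acting coefficientwise on superfields. -/
def Pm (c : SF A) : SF A := fun k a b => pdm (c k a b)

/-- `∂₊` acting coefficientwise on superfields. -/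
def Pp (c : SF A) : SF A := fun k a b => pdp (c k a b)

/-- `∂_z`, acting on normal-form monomials by `∂_z(z^k θ₋^a θ₊^b f) = k z^{k-1} θ₋^a θ₊^b f`. -/
def Pz (c : SF A) : SF A := fun k a b => ((k + 1 : ℕ) : ℝ) • c (k + 1) a b

/-- `∂_{θ₋}`, acting by `∂_{θ₋}(z^k θ₋^a θ₊^b f) = (-1)^k a z^k θ₊^b f`. -/
def Dthm (c : SF A) : SF A := fun k a b => if a then 0 else ((-1 : ℝ) ^ k) • c k true b

/-- `∂_{θ₊}`, acting by `∂_{θ₊}(z^k θ₋^a θ₊^b f) = (-1)^k b z^k θ₋^a f`. -/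
def Dthp (c : SF A) : SF A := fun k a b => if b then 0 else ((-1 : ℝ) ^ k) • c k a true

/-- Left multiplication by `θ₋` (recall `z θ₋ = -θ₋ z`). -/
def Mthm (c : SF A) : SF A := fun k a b => if a then ((-1 : ℝ) ^ k) • c k false b else 0

/-- Left multiplication by `θ₊` (recall `z θ₊ = -θ₊ z`). -/
def Mthp (c : SF A) : SF A := fun k a b => if b then ((-1 : ℝ) ^ k) • c k a false else 0

/-- The supercharge `Q₋ = ∂_{θ₋} + ½ θ₋ ∂₋ − ½ θ₊ ∂_z`. -/
def Qm (c : SF A) : SF A := Dthm c + (1/2 : ℝ) • Mthm (Pm c) - (1/2 : ℝ) • Mthp (Pz c)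

/-- The supercharge `Q₊ = ∂_{θ₊} + ½ θ₊ ∂₊ + ½ θ₋ ∂_z`. -/
def Qp (c : SF A) : SF A := Dthp c + (1/2 : ℝ) • Mthp (Pp c) + (1/2 : ℝ) • Mthm (Pz c)

/-- The SUSY covariant derivative `D₋ = ∂_{θ₋} − ½ θ₋ ∂₋ + ½ θ₊ ∂_z`. -/
def Dm (c : SF A) : SF A := Dthm c - (1/2 : ℝ) • Mthm (Pm c) + (1/2 : ℝ) • Mthp (Pz c)

/-- The SUSY covariant derivative `D₊ = ∂_{θ₊} − ½ θ₊ ∂₊ − ½ θ₋ ∂_z`. -/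
def Dp (c : SF A) : SF A := Dthp c - (1/2 : ℝ) • Mthp (Pp c) - (1/2 : ℝ) • Mthm (Pz c)

end SF

/-- The Koszul sign occurring when forming the normal form of the product
`(z^k θ₋^a θ₊^b f)·(z^l θ₋^{a'} θ₊^{b'} g)`, where the left factor is a coefficient term of a
homogeneous superfield of total `ℤ₂²`-degree `δ` (so that `f` is homogeneous of degree
`δ + mdeg k a b`). -/
def koz (δ : G2) (k : ℕ) (a b : Bool) (l : ℕ) (a' b' : Bool) : ℝ :=
  ksign (ip (δ + mdeg k a b) (mdeg l a' b') + (l : ZMod 2) * (bz a + bz b))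

/-- The product of superfields in `𝒜_A`, where `δ` is the total `ℤ₂²`-degree of the
(homogeneous) left factor. -/
def SF.mul {A : Type*} [NormedRing A] [NormedAlgebra ℝ A] (δ : G2) (c d : SF A) : SF A :=
  fun n e f x =>
    ∑ k ∈ Finset.range (n + 1), ∑ a : Bool, ∑ b : Bool, ∑ a' : Bool, ∑ b' : Bool,
      if (a != a') = e ∧ (a && a') = false ∧ (b != b') = f ∧ (b && b') = false then
        koz δ k a b (n - k) a' b' • (c k a b x * d (n - k) a' b' x)
      else 0

/-- The superfield `Φ = X + θ₋ ψ₊ + θ₊ ψ₋ + θ₋θ₊ F + z G + z θ₋ χ₊ + z θ₊ χ₋ + z θ₋θ₊ Y`. -/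
def mkPhi {A : Type*} [NormedRing A] [NormedAlgebra ℝ A]
    (X ψp ψm F G χp χm Y : E2 → A) : SF A := fun k a b =>
  match k, a, b with
  | 0, false, false => X
  | 0, true,  false => ψp
  | 0, false, true  => ψm
  | 0, true,  true  => F
  | 1, false, false => G
  | 1, true,  false => χp
  | 1, false, true  => χm
  | 1, true,  true  => Y
  | _, _, _ => 0

/-- Left multiplication of a superfield by a constant `ε ∈ A` of `ℤ₂²`-degree `γ`:
`ε · z^k θ₋^a θ₊^b f = (-1)^{⟨γ, mdeg k a b⟩} z^k θ₋^a θ₊^b (ε f)`. -/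
def Cmul {A : Type*} [NormedRing A] [NormedAlgebra ℝ A] (γ : G2) (ε : A) (c : SF A) : SF A :=
  fun k a b p => ksign (ip γ (mdeg k a b)) • (ε * c k a b p)

open SF in
/-- The component form (2.6) of the `ℤ₂²`-supersymmetry transformations: for a
`z`-constrained degree-`(0,0)` superfield `Φ = X + θ₋ψ₊ + θ₊ψ₋ + θ₋θ₊F + zθ₋θ₊Y` and
constants `ε₋, ε₊` of degrees `(0,1)`, `(1,0)`, the `z`-degree-zero part of
`(ε₋Q₋ + ε₊Q₊)Φ` is `δX + θ₋ δψ₊ + θ₊ δψ₋ + θ₋θ₊ δF` with `δX = ε₋ψ₊ + ε₊ψ₋`,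
`δψ₊ = −½ε₋∂₋X + ε₊F`, `δψ₋ = −½ε₊∂₊X + ε₋F` and `δF = −½(ε₋∂₋ψ₋ + ε₊∂₊ψ₊)`. -/
theorem z22_supersymmetry_component_form
    {A : Type*} [NormedRing A] [NormedAlgebra ℝ A] [CompleteSpace A]
    (𝒜 : G2 → Submodule ℝ A)
    (hK : ∀ γ γ' (u v : A), u ∈ 𝒜 γ → v ∈ 𝒜 γ' → u * v = ksign (ip γ γ') • (v * u))
    (X ψp ψm F Y : E2 → A) (εm εp : A)
    (hXs : ContDiff ℝ (⊤ : ℕ∞) X) (hψps : ContDiff ℝ (⊤ : ℕ∞) ψp)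
    (hψms : ContDiff ℝ (⊤ : ℕ∞) ψm) (hFs : ContDiff ℝ (⊤ : ℕ∞) F)
    (hYs : ContDiff ℝ (⊤ : ℕ∞) Y)
    (hXd : ∀ p, X p ∈ 𝒜 (0, 0)) (hψpd : ∀ p, ψp p ∈ 𝒜 (0, 1))
    (hψmd : ∀ p, ψm p ∈ 𝒜 (1, 0)) (hFd : ∀ p, F p ∈ 𝒜 (1, 1))
    (hYd : ∀ p, Y p ∈ 𝒜 (0, 0))
    (hεmd : εm ∈ 𝒜 (0, 1)) (hεpd : εp ∈ 𝒜 (1, 0)) :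
    (Cmul (0, 1) εm (Qm (mkPhi X ψp ψm F 0 0 0 Y)) +
       Cmul (1, 0) εp (Qp (mkPhi X ψp ψm F 0 0 0 Y))) 0 false false =
      (fun p => εm * ψp p + εp * ψm p) ∧
    (Cmul (0, 1) εm (Qm (mkPhi X ψp ψm F 0 0 0 Y)) +
       Cmul (1, 0) εp (Qp (mkPhi X ψp ψm F 0 0 0 Y))) 0 true false =
      (fun p => -((1/2 : ℝ) • (εm * pdm X p)) + εp * F p) ∧
    (Cmul (0, 1) εm (Qm (mkPhi X ψp ψm F 0 0 0 Y)) +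
       Cmul (1, 0) εp (Qp (mkPhi X ψp ψm F 0 0 0 Y))) 0 false true =
      (fun p => -((1/2 : ℝ) • (εp * pdp X p)) + εm * F p) ∧
    (Cmul (0, 1) εm (Qm (mkPhi X ψp ψm F 0 0 0 Y)) +
       Cmul (1, 0) εp (Qp (mkPhi X ψp ψm F 0 0 0 Y))) 0 true true =
      (fun p => -((1/2 : ℝ) • (εm * pdm ψm p + εp * pdp ψp p))) := by
  refine ⟨?_, ?_, ?_, ?_⟩ <;> funext p <;>
    simp [SF.Qm, SF.Qp, SF.Dthm, SF.Dthp, SF.Mthm, SF.Mthp, SF.Pm, SF.Pp, SF.Pz,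
      Cmul, mkPhi, ksign, ip, mdeg, bz, pdm, pdp, Pi.add_apply, Pi.sub_apply, Pi.smul_apply,
      smul_smul, mul_add, mul_smul_comm, smul_sub, smul_add, sub_eq_add_neg] <;> ring_nf <;>
    abel
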